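/- Let n₀, n₁, n₂ ∈ ℝ³ with ‖n_i‖ ≤ 1 for each i, lying in a common plane through the origin (there exists a nonzero w ∈ ℝ³ with ⟨w, n_i⟩ = 0 for all i), and let M⁰, M¹, M² be the corresponding unbiased binary qubit POVMs with effects M^i_z = (1/2)(I + (−1)^z n_i·σ), z ∈ {0,1}. Then the three measurements are not fully incompatible with respect to disjoint-convex-mixing: there exist a permutation (i,j,k) of (0,1,2) and q ∈ [0,1] such that the binary qubit POVMs M^i and (q M^j_z + (1−q) M^k_z)_{z∈{0,1}} are jointly measurable. -/

import Mathlib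

open Matrix Finset
open scoped ComplexOrder

noncomputable section

/-- A `d`-outcome POVM on `ℂ^n`: positive semidefinite effects summing to the identity. -/
def IsPOVM {n d : ℕ} (M : Fin d → Matrix (Fin n) (Fin n) ℂ) : Prop :=
  (∀ z, (M z).PosSemidef) ∧ ∑ z, M z = 1

/-- Coarse-graining of a `d`-outcome POVM along `f : Fin d → Fin k`. -/
def coarseGrain {n d k : ℕ} (M : Fin d → Matrix (Fin n) (Fin n) ℂ) (f : Fin d → Fin k)
    (z' : Fin k) : Matrix (Fin n) (Fin n) ℂ :=
  ∑ z ∈ Finset.univ.filter (fun z => f z = z'), M z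

/-- Compatibility of a finite family of `d`-outcome POVMs: existence of a parent POVM
`G` together with classical post-processings `p`. -/
def Compatible {n m d : ℕ} (M : Fin m → Fin d → Matrix (Fin n) (Fin n) ℂ) : Prop :=
  ∃ (L : ℕ) (G : Fin L → Matrix (Fin n) (Fin n) ℂ) (p : Fin m → Fin d → Fin L → ℝ),
    (∀ l, (G l).PosSemidef) ∧ (∑ l, G l = 1) ∧
    (∀ x z l, 0 ≤ p x z l) ∧ (∀ x l, ∑ z, p x z l = 1) ∧
    (∀ x z, M x z = ∑ l, (p x z l : ℂ) • G l)

/-- Joint measurability of two POVMs via a joint parent POVM with marginals `A` and `B`. -/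
def JointlyMeasurable {n a b : ℕ} (A : Fin a → Matrix (Fin n) (Fin n) ℂ)
    (B : Fin b → Matrix (Fin n) (Fin n) ℂ) : Prop :=
  ∃ G : Fin a → Fin b → Matrix (Fin n) (Fin n) ℂ,
    (∀ i j, (G i j).PosSemidef) ∧ (∑ i, ∑ j, G i j = 1) ∧
    (∀ i, A i = ∑ j, G i j) ∧ (∀ j, B j = ∑ i, G i j)

/-- The Pauli matrix `σ_x`. -/
def σx : Matrix (Fin 2) (Fin 2) ℂ := !![0, 1; 1, 0]

/-- The Pauli matrix `σ_y`. -/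
def σy : Matrix (Fin 2) (Fin 2) ℂ := !![0, -Complex.I; Complex.I, 0]

/-- The Pauli matrix `σ_z`. -/
def σz : Matrix (Fin 2) (Fin 2) ℂ := !![1, 0; 0, -1]

/-- The unbiased binary qubit POVM with Bloch vector `v`: effects `(1/2)(I + (−1)^z v·σ)`. -/
def bloch (v : EuclideanSpace ℝ (Fin 3)) (z : Fin 2) : Matrix (Fin 2) (Fin 2) ℂ :=
  (1/2 : ℂ) • (1 + ((-1 : ℂ)) ^ (z : ℕ) •
    ((v 0 : ℂ) • σx + (v 1 : ℂ) • σy + (v 2 : ℂ) • σz))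

/-!
Bloch vectors in a common plane through the origin are linearly dependent, and a sign
argument on a dependence relation shows that some multiple of one of them is a convex
combination of the other two. Mixing unbiased qubit POVMs mixes their Bloch vectors, so it
remains to see that two such POVMs with parallel Bloch vectors are jointly measurable: the
one with the shorter vector is obtained from the other by flipping its outcome at random.
Positivity of the effects comes from `E = Eᴴ E + ((1 - ‖v‖²) / 4) • 1`.
-/

lemma JointlyMeasurable.symm {n a b : ℕ} {A : Fin a → Matrix (Fin n) (Fin n) ℂ}
    {B : Fin b → Matrix (Fin n) (Fin n) ℂ} (h : JointlyMeasurable A B) :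
    JointlyMeasurable B A := by
  obtain ⟨G, hG, hsum, hA, hB⟩ := h
  exact ⟨fun j i => G i j, fun j i => hG i j, by rwa [Finset.sum_comm], hB, hA⟩

lemma IsPOVM.jointlyMeasurable_of_postprocessing {n a b : ℕ}
    {A : Fin a → Matrix (Fin n) (Fin n) ℂ} (hA : IsPOVM A) {B : Fin b → Matrix (Fin n) (Fin n) ℂ}
    (p : Fin a → Fin b → ℝ) (hp : ∀ i j, 0 ≤ p i j) (hp₁ : ∀ i, ∑ j, p i j = 1)
    (hB : ∀ j, B j = ∑ i, (p i j : ℂ) • A i) : JointlyMeasurable A B := by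
  have hmarg : ∀ i, ∑ j, (p i j : ℂ) • A i = A i := fun i => by
    rw [← Finset.sum_smul, ← Complex.ofReal_sum, hp₁, Complex.ofReal_one, one_smul]
  refine ⟨fun i j => (p i j : ℂ) • A i, fun i j => (hA.1 i).smul ?_, ?_, fun i => (hmarg i).symm,
    hB⟩
  · exact_mod_cast hp i j
  · simp only [hmarg]; exact hA.2

lemma bloch_isHermitian (v : EuclideanSpace ℝ (Fin 3)) (z : Fin 2) :
    (bloch v z).IsHermitian := by
  ext i j
  fin_cases z <;> fin_cases i <;> fin_cases j <;>
    simp [bloch, σx, σy, σz, Matrix.conjTranspose_apply, Complex.ext_iff] <;> ring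

lemma bloch_mul_self (v : EuclideanSpace ℝ (Fin 3)) (z : Fin 2) :
    bloch v z * bloch v z = bloch v z - (((1 - ‖v‖ ^ 2) / 4 : ℝ) : ℂ) • 1 := by
  rw [EuclideanSpace.norm_sq_eq, Fin.sum_univ_three]
  ext i j
  fin_cases z <;> fin_cases i <;> fin_cases j <;>
    simp [bloch, σx, σy, σz, Matrix.mul_apply, Fin.sum_univ_two] <;> ring_nf <;>
    simp [Complex.I_sq] <;> ring

lemma bloch_posSemidef {v : EuclideanSpace ℝ (Fin 3)} (hv : ‖v‖ ≤ 1) (z : Fin 2) :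
    (bloch v z).PosSemidef := by
  have hc : (0 : ℝ) ≤ (1 - ‖v‖ ^ 2) / 4 := by nlinarith [norm_nonneg v]
  have h : bloch v z = (bloch v z)ᴴ * bloch v z + (((1 - ‖v‖ ^ 2) / 4 : ℝ) : ℂ) • 1 := by
    rw [(bloch_isHermitian v z).eq, bloch_mul_self]; abel
  rw [h]
  exact (posSemidef_conjTranspose_mul_self _).add (PosSemidef.one.smul (by exact_mod_cast hc))

lemma bloch_zero_add_bloch_one (v : EuclideanSpace ℝ (Fin 3)) :
    bloch v 0 + bloch v 1 = 1 := by
  simp only [bloch]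
  norm_num
  module

lemma isPOVM_bloch {v : EuclideanSpace ℝ (Fin 3)} (hv : ‖v‖ ≤ 1) : IsPOVM (bloch v) :=
  ⟨bloch_posSemidef hv, by rw [Fin.sum_univ_two, bloch_zero_add_bloch_one]⟩

-- The outcome of `bloch u` is kept with probability `(1 + t) / 2` and flipped otherwise.
lemma bloch_smul (t : ℝ) (u : EuclideanSpace ℝ (Fin 3)) (z' : Fin 2) :
    bloch (t • u) z' =
      ∑ z : Fin 2, (((1 + (-1) ^ ((z : ℕ) + z') * t) / 2 : ℝ) : ℂ) • bloch u z := by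
  fin_cases z' <;> simp [Fin.sum_univ_two, bloch] <;> module

lemma jointlyMeasurable_bloch_smul {u : EuclideanSpace ℝ (Fin 3)} (hu : ‖u‖ ≤ 1) {t : ℝ}
    (ht : |t| ≤ 1) : JointlyMeasurable (bloch u) (bloch (t • u)) := by
  obtain ⟨ht₁, ht₂⟩ := abs_le.1 ht
  refine (isPOVM_bloch hu).jointlyMeasurable_of_postprocessing _ (fun z z' => ?_) (fun z => ?_)
    (bloch_smul t u)
  · rcases neg_one_pow_eq_or ℝ ((z : ℕ) + z') with h | h <;> rw [h] <;> linarith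
  · simp only [Fin.sum_univ_two]
    fin_cases z <;> norm_num <;> ring

lemma jointlyMeasurable_bloch_of_eq_smul {u v : EuclideanSpace ℝ (Fin 3)} (hu : ‖u‖ ≤ 1)
    (hv : ‖v‖ ≤ 1) {t : ℝ} (h : v = t • u) : JointlyMeasurable (bloch u) (bloch v) := by
  rcases le_or_gt |t| 1 with ht | ht
  · exact h ▸ jointlyMeasurable_bloch_smul hu ht
  · have ht₀ : t ≠ 0 := by rintro rfl; norm_num at ht
    have hu' : u = t⁻¹ • v := by rw [h, inv_smul_smul₀ ht₀]
    have ht' : |t⁻¹| ≤ 1 := by rw [abs_inv]; exact inv_le_one_of_one_le₀ ht.le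
    exact (hu' ▸ jointlyMeasurable_bloch_smul hv ht').symm

lemma bloch_convex_combination (q : ℝ) (b c : EuclideanSpace ℝ (Fin 3)) (z : Fin 2) :
    (q : ℂ) • bloch b z + ((1 - q : ℝ) : ℂ) • bloch c z = bloch (q • b + (1 - q) • c) z := by
  simp only [bloch, PiLp.add_apply, PiLp.smul_apply, smul_eq_mul]
  push_cast
  module

open scoped RealInnerProductSpace in
lemma not_linearIndependent_of_inner_eq_zero {E ι : Type*} [NormedAddCommGroup E]
    [InnerProductSpace ℝ E] [FiniteDimensional ℝ E] [Fintype ι] {n : ι → E}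
    (hcard : Fintype.card ι = Module.finrank ℝ E) {w : E} (hw : w ≠ 0)
    (hperp : ∀ i, ⟪w, n i⟫ = 0) : ¬ LinearIndependent ℝ n := by
  intro hli
  have hspan : Submodule.span ℝ (Set.range n) ≤ (ℝ ∙ w)ᗮ := by
    rw [Submodule.span_le]
    rintro _ ⟨i, rfl⟩
    exact Submodule.mem_orthogonal_singleton_iff_inner_right.2 (hperp i)
  rw [hli.span_eq_top_of_card_eq_finrank' hcard, top_le_iff,
    Submodule.orthogonal_eq_top_iff, Submodule.span_singleton_eq_bot] at hspan
  exact hw hspan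

lemma exists_mul_nonneg_add_ne_zero {g : Fin 3 → ℝ} (hg : g ≠ 0) :
    ∃ i j k : Fin 3, i ≠ j ∧ j ≠ k ∧ i ≠ k ∧ 0 ≤ g j * g k ∧ g j + g k ≠ 0 := by
  by_contra! h
  have h01 := h 2 0 1 (by decide) (by decide) (by decide)
  have h02 := h 1 0 2 (by decide) (by decide) (by decide)
  have h12 := h 0 1 2 (by decide) (by decide) (by decide)
  -- The three pairwise products cannot all be negative: their product is a square.
  have hsame : 0 ≤ g 0 * g 1 ∨ 0 ≤ g 0 * g 2 ∨ 0 ≤ g 1 * g 2 := by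
    by_contra! ⟨a, b, c⟩
    nlinarith [mul_neg_of_pos_of_neg (mul_pos_of_neg_of_neg a b) c, sq_nonneg (g 0 * g 1 * g 2)]
  have hzero : ∀ {a b : ℝ}, 0 ≤ a * b → a + b = 0 → a = 0 ∧ b = 0 := fun hab hs => by
    constructor <;> nlinarith
  apply hg
  rcases hsame with hs | hs | hs
  · obtain ⟨h0, h1⟩ := hzero hs (h01 hs)
    obtain ⟨-, h2⟩ := hzero (by simp [h0]) (h02 (by simp [h0]))
    ext i; fin_cases i <;> assumption
  · obtain ⟨h0, h2⟩ := hzero hs (h02 hs)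
    obtain ⟨-, h1⟩ := hzero (by simp [h0]) (h01 (by simp [h0]))
    ext i; fin_cases i <;> assumption
  · obtain ⟨h1, h2⟩ := hzero hs (h12 hs)
    obtain ⟨h0, -⟩ := hzero (by simp [h1]) (h01 (by simp [h1]))
    ext i; fin_cases i <;> assumption

lemma Fin.sum_univ_three_of_ne {M : Type*} [AddCommMonoid M] (f : Fin 3 → M) {i j k : Fin 3}
    (hij : i ≠ j) (hjk : j ≠ k) (hik : i ≠ k) : ∑ l, f l = f i + f j + f k := by
  fin_cases i <;> fin_cases j <;> fin_cases k <;> simp_all [Fin.sum_univ_three] <;> abel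

lemma exists_convex_combination_eq_smul_of_not_linearIndependent {V : Type*} [AddCommGroup V]
    [Module ℝ V] {n : Fin 3 → V} (hn : ¬ LinearIndependent ℝ n) :
    ∃ (i j k : Fin 3) (q t : ℝ), i ≠ j ∧ j ≠ k ∧ i ≠ k ∧ q ∈ Set.Icc (0 : ℝ) 1 ∧
      q • n j + (1 - q) • n k = t • n i := by
  obtain ⟨g, hrel, hg⟩ := Fintype.not_linearIndependent_iff.1 hn
  obtain ⟨i, j, k, hij, hjk, hik, hprod, hs⟩ :=
    exists_mul_nonneg_add_ne_zero (Function.ne_iff.2 hg)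
  rw [Fin.sum_univ_three_of_ne _ hij hjk hik] at hrel
  set s := g j + g k
  have hdiv_nonneg : ∀ {a}, 0 ≤ a * s → 0 ≤ a / s := fun h => by
    rw [← mul_div_mul_right _ _ hs]; exact div_nonneg h (mul_self_nonneg s)
  have hq : 1 - g j / s = g k / s := by field_simp; ring
  refine ⟨i, j, k, g j / s, -g i / s, hij, hjk, hik,
    ⟨hdiv_nonneg (by nlinarith [sq_nonneg (g j)]), ?_⟩, ?_⟩
  · linarith [hdiv_nonneg (a := g k) (by nlinarith [sq_nonneg (g k)])]
  · rw [hq]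
    linear_combination (norm := module) s⁻¹ • hrel

open scoped RealInnerProductSpace in
/-- Three unbiased qubit measurements whose Bloch vectors lie in a common plane through the
origin are not fully incompatible w.r.t. disjoint-convex-mixing: some measurement is jointly
measurable with some disjoint convex mixture of the other two. -/
theorem coplanar_not_fully_incompatible_convex_mixing
    (n : Fin 3 → EuclideanSpace ℝ (Fin 3)) (hn : ∀ i, ‖n i‖ ≤ 1)
    (w : EuclideanSpace ℝ (Fin 3)) (hw : w ≠ 0) (hperp : ∀ i, ⟪w, n i⟫ = 0) :
    ∃ (i j k : Fin 3) (q : ℝ), i ≠ j ∧ j ≠ k ∧ i ≠ k ∧ q ∈ Set.Icc (0 : ℝ) 1 ∧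
      JointlyMeasurable (bloch (n i))
        (fun z => (q : ℂ) • bloch (n j) z + ((1 - q : ℝ) : ℂ) • bloch (n k) z) := by
  obtain ⟨i, j, k, q, t, hij, hjk, hik, hq, hmix⟩ :=
    exists_convex_combination_eq_smul_of_not_linearIndependent
      (not_linearIndependent_of_inner_eq_zero (by simp) hw hperp)
  have hnorm : ‖q • n j + (1 - q) • n k‖ ≤ 1 := mem_closedBall_zero_iff.1 <|
    convex_closedBall 0 1 (mem_closedBall_zero_iff.2 (hn j)) (mem_closedBall_zero_iff.2 (hn k))
      hq.1 (sub_nonneg.2 hq.2) (add_sub_cancel q 1)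
  refine ⟨i, j, k, q, hij, hjk, hik, hq, ?_⟩
  simp_rw [bloch_convex_combination]
  exact jointlyMeasurable_bloch_of_eq_smul (hn i) hnorm hmix
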